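/- Let R be a commutative ring, equip the free algebra R⟨X₁,…,Xₙ⟩ with a weight ℕ-gradation determined by positive integer degrees deg Xᵢ = nᵢ, let ≺ be an ℕ-graded monomial ordering on the standard monomial basis B, and let G be a monic Gröbner basis of the ideal I = ⟨G⟩. If the monomial algebra R⟨X₁,…,Xₙ⟩/⟨LM(G)⟩ is a semisimple ring (semisimple as a left module over itself), then both R⟨X₁,…,Xₙ⟩/⟨LH(G)⟩ and A = R⟨X₁,…,Xₙ⟩/I are semisimple rings. -/

import Mathlib

noncomputable section
open MonoidAlgebra
open scoped Classical

/-- Words in the alphabet `X_1, ..., X_n`: the standard monomial basis `B`. -/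
abbrev Word (n : ℕ) : Type := FreeMonoid (Fin n)

/-- The free `R`-algebra `R⟨X_1, ..., X_n⟩`, realized as the monoid algebra of the
free monoid on `n` letters over `R`. -/
abbrev FreeAlg (R : Type) [CommRing R] (n : ℕ) : Type := MonoidAlgebra R (Word n)

variable {R : Type} [CommRing R] {n : ℕ}

/-- The monomial (word) `w` viewed as an element of the free algebra. -/
def mono (R : Type) [CommRing R] {n : ℕ} (w : Word n) : FreeAlg R n :=
  MonoidAlgebra.of R (Word n) w

/-- A monomial ordering: a well-ordering on words compatible with two-sided multiplication. -/
def IsMonomialOrder (n : ℕ) [LinearOrder (Word n)] : Prop :=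
  WellFoundedLT (Word n) ∧ ∀ w u v s : Word n, u < v → w * u * s < w * v * s

/-- The leading monomial of `f` (with junk value `1` for `f = 0`). -/
def LMon [LinearOrder (Word n)] (f : FreeAlg R n) : Word n :=
  if h : f = 0 then 1 else f.coeff.support.max' (Finsupp.support_nonempty_iff.mpr (MonoidAlgebra.coeff_eq_zero.not.mpr h))

/-- The leading coefficient of `f`. -/
def LCoef [LinearOrder (Word n)] (f : FreeAlg R n) : R := f.coeff (LMon f)

/-- `f` is monic: it is nonzero and its leading coefficient is `1`. -/
def IsMonic [LinearOrder (Word n)] (f : FreeAlg R n) : Prop := f ≠ 0 ∧ LCoef f = 1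

/-- `v` divides `u` as words: `u = w * v * s` for some words `w, s`. -/
def MDvd {n : ℕ} (v u : Word n) : Prop := ∃ w s : Word n, u = w * v * s

/-- `G` is a monic Gröbner basis of the two-sided ideal `I`: every element of `G` is monic,
and the leading monomial of every nonzero element of `I` is divisible by the leading
monomial of some element of `G`. -/
def IsMonicGB [LinearOrder (Word n)] (G : Set (FreeAlg R n))
    (I : TwoSidedIdeal (FreeAlg R n)) : Prop :=
  (∀ g ∈ G, IsMonic g) ∧ ∀ f ∈ I, f ≠ 0 → ∃ g ∈ G, MDvd (LMon g) (LMon f)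

/-- The set `LM(S)` of leading monomials of the nonzero elements of `S`. -/
def LMset [LinearOrder (Word n)] (S : Set (FreeAlg R n)) : Set (Word n) :=
  {w | ∃ f ∈ S, f ≠ 0 ∧ LMon f = w}

/-- The weight degree of a word, for the weights `deg Xᵢ = d i`. -/
def wdeg {n : ℕ} (d : Fin n → ℕ) (w : Word n) : ℕ := ((FreeMonoid.toList w).map d).sum

/-- The maximal weight degree occurring in `f`. -/
def maxdeg (d : Fin n → ℕ) (f : FreeAlg R n) : ℕ := f.coeff.support.sup (wdeg d)

/-- The ℕ-leading homogeneous element `LH(f)` of `f`: the sum of the terms of `f` of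
maximal weight degree. -/
def LH (d : Fin n → ℕ) (f : FreeAlg R n) : FreeAlg R n :=
  ∑ w ∈ f.coeff.support.filter (fun w => wdeg d w = maxdeg d f), MonoidAlgebra.single w (f.coeff w)

/-- The set `LH(S)` of leading homogeneous elements of the nonzero elements of `S`. -/
def LHset (d : Fin n → ℕ) (S : Set (FreeAlg R n)) : Set (FreeAlg R n) :=
  {x | ∃ f ∈ S, f ≠ 0 ∧ x = LH d f}

/-- An ℕ-graded monomial ordering with respect to the weights `d`: a monomial ordering
such that words of smaller degree are smaller. -/
def IsGradedMonomialOrder {n : ℕ} (d : Fin n → ℕ) [LinearOrder (Word n)] : Prop :=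
  IsMonomialOrder n ∧ ∀ u v : Word n, wdeg d u < wdeg d v → u < v

/-- The quotient ring of the free algebra by a two-sided ideal. -/
abbrev QuotRing (I : TwoSidedIdeal (FreeAlg R n)) : Type := I.ringCon.Quotient

/-!
For a monic `g`, the graded ordering gives `LM(LH(g)) = LM(g)` with `LH(g)` again monic, so both
`LH(G)` and `G` contain, for every `w ∈ LM(G)`, a monic element with leading monomial `w`.
If `1 ∈ LM(G)` then `1 ∈ G` (the word `1` is the least one) and all quotients are zero.
Otherwise the augmentation `Xᵢ ↦ 0` makes `R` a quotient of the semisimple monomial algebra, and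
semisimplicity of that algebra forces every nonempty word to be divisible by a word of `LM(G)`.
Dividing by monic elements then shows that `R⟨X⟩/⟨LH(G)⟩` and `R⟨X⟩/⟨G⟩` are spanned by `1`, so
they are quotients of the semisimple ring `R`.
-/

namespace TwoSidedIdeal

variable {A : Type} [Ring A] {I : TwoSidedIdeal A}

lemma ringCon_mk'_eq_zero_iff {x : A} : I.ringCon.mk' x = 0 ↔ x ∈ I := by
  rw [← mem_ker, ker_ringCon_mk']

lemma subsingleton_quotient_of_one_mem (h : 1 ∈ I) : Subsingleton I.ringCon.Quotient := by
  rw [RingCon.subsingleton_quotient, (one_mem_iff I).mp h, top_ringCon]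

end TwoSidedIdeal

lemma MDvd.mul_left {v u : Word n} (h : MDvd v u) (a : Word n) : MDvd v (a * u) := by
  obtain ⟨w, s, rfl⟩ := h
  exact ⟨a * w, s, by simp only [mul_assoc]⟩

lemma MDvd.mul_right {v u : Word n} (h : MDvd v u) (a : Word n) : MDvd v (u * a) := by
  obtain ⟨w, s, rfl⟩ := h
  exact ⟨w, s * a, by simp only [mul_assoc]⟩

lemma wdeg_pos {d : Fin n → ℕ} (hd : ∀ i, 0 < d i) {w : Word n} (hw : w ≠ 1) : 0 < wdeg d w := by
  cases h : FreeMonoid.toList w with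
  | nil => exact absurd (FreeMonoid.toList.injective (h.trans FreeMonoid.toList_one.symm)) hw
  | cons a l => simpa [wdeg, h] using Or.inl (hd a)

lemma one_le_of_weights_pos [LinearOrder (Word n)] {d : Fin n → ℕ} (hd : ∀ i, 0 < d i)
    (hgr : ∀ u v : Word n, wdeg d u < wdeg d v → u < v) (w : Word n) : 1 ≤ w := by
  rcases eq_or_ne w 1 with rfl | hw
  · exact le_rfl
  · exact (hgr 1 w (by simpa [wdeg] using wdeg_pos hd hw)).le

lemma coeff_mono (w u : Word n) : (mono R w).coeff u = if w = u then 1 else 0 := by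
  rw [mono, MonoidAlgebra.of_apply, MonoidAlgebra.coeff_single, Finsupp.single_apply]

lemma coeff_mono_mul_self (m : Word n) (x : FreeAlg R n) : (mono R m * x).coeff m = x.coeff 1 := by
  rw [mono, MonoidAlgebra.of_apply,
    MonoidAlgebra.coeff_single_mul_eq_mul_coeff 1 fun t _ => by simp, one_mul]

lemma mem_of_forall_mono_mem {P : Submodule R (FreeAlg R n)} {x : FreeAlg R n}
    (h : ∀ w ∈ x.coeff.support, mono R w ∈ P) : x ∈ P :=
  Submodule.span_le.mpr (Set.image_subset_iff.mpr h) (MonoidAlgebra.mem_span_support_coeff x)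

lemma exists_eq_of_mem_support_mono_mul_mul_mono {u s w : Word n} {x : FreeAlg R n}
    (hw : w ∈ (mono R u * x * mono R s).coeff.support) :
    ∃ t ∈ x.coeff.support, w = u * t * s := by
  obtain ⟨v, hv, rfl⟩ :=
    Finset.mem_image.mp (MonoidAlgebra.support_coeff_mul_single_subset _ _ _ hw)
  obtain ⟨t, ht, rfl⟩ :=
    Finset.mem_image.mp (MonoidAlgebra.support_coeff_single_mul_subset _ _ _ hv)
  exact ⟨t, ht, rfl⟩

lemma support_subset_of_mem_span_mono {S : Set (Word n)} {x : FreeAlg R n}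
    (hx : x ∈ TwoSidedIdeal.span (mono R '' S)) : ∀ u ∈ x.coeff.support, ∃ w ∈ S, MDvd w u := by
  induction hx using TwoSidedIdeal.span_induction with
  | mem _ h =>
    obtain ⟨w, hw, rfl⟩ := h
    intro u hu
    rw [Finsupp.mem_support_iff, coeff_mono, ite_ne_right_iff] at hu
    exact ⟨w, hw, 1, 1, by simp [hu.1]⟩
  | zero => simp
  | add x y _ _ hx hy =>
    intro u hu
    rw [MonoidAlgebra.coeff_add] at hu
    exact (Finset.mem_union.mp (Finsupp.support_add hu)).elim (hx u) (hy u)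
  | neg x _ hx => simpa using hx
  | left_absorb a x _ hx =>
    intro u hu
    obtain ⟨s, -, t, ht, rfl⟩ := Finset.mem_mul.mp (MonoidAlgebra.support_coeff_mul_subset a x hu)
    obtain ⟨w, hw, hdvd⟩ := hx t ht
    exact ⟨w, hw, hdvd.mul_left s⟩
  | right_absorb b x _ hx =>
    intro u hu
    obtain ⟨t, ht, s, -, rfl⟩ := Finset.mem_mul.mp (MonoidAlgebra.support_coeff_mul_subset x b hu)
    obtain ⟨w, hw, hdvd⟩ := hx t ht
    exact ⟨w, hw, hdvd.mul_right s⟩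

def augmentation : FreeAlg R n →ₐ[R] R :=
  MonoidAlgebra.lift R R (Word n) (FreeMonoid.lift fun _ => 0)

lemma freeMonoid_lift_zero_apply (w : Word n) :
    FreeMonoid.lift (fun _ => (0 : R)) w = if w = 1 then 1 else 0 := by
  cases h : FreeMonoid.toList w with
  | nil => simp [FreeMonoid.toList.injective (h.trans FreeMonoid.toList_one.symm)]
  | cons a l =>
    have hw : w ≠ 1 := fun hw => by simp [hw] at h
    simp [FreeMonoid.lift_apply, h, hw]

lemma augmentation_apply (x : FreeAlg R n) : augmentation x = x.coeff 1 := by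
  simp only [augmentation, MonoidAlgebra.lift_apply, freeMonoid_lift_zero_apply, smul_eq_mul,
    mul_ite, mul_one, mul_zero, Finsupp.sum_ite_self_eq']

lemma isSemisimpleRing_of_quotRing_span_mono {S : Set (Word n)} (hS1 : 1 ∉ S)
    (hS : IsSemisimpleRing (QuotRing (TwoSidedIdeal.span (mono R '' S)))) :
    IsSemisimpleRing R := by
  set ε : FreeAlg R n →+* R := (augmentation : FreeAlg R n →ₐ[R] R).toRingHom
  have hker : TwoSidedIdeal.span (mono R '' S) ≤ TwoSidedIdeal.ker ε := by
    refine TwoSidedIdeal.span_le.mpr ?_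
    rintro _ ⟨w, hw, rfl⟩
    rw [SetLike.mem_coe, TwoSidedIdeal.mem_ker]
    change (augmentation : FreeAlg R n →ₐ[R] R) (mono R w) = 0
    rw [augmentation_apply, coeff_mono, if_neg (by rintro rfl; exact hS1 hw)]
  have hle : (TwoSidedIdeal.span (mono R '' S)).ringCon ≤ RingCon.ker ε := fun x y h => by
    rw [RingCon.ker_apply, ← sub_eq_zero, ← map_sub, ← TwoSidedIdeal.mem_ker]
    exact hker ((TwoSidedIdeal.rel_iff _ _ _).mp h)
  refine RingHom.isSemisimpleRing_of_surjective (RingCon.lift _ _ hle) fun r =>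
    ⟨RingCon.mk' _ (algebraMap R _ r), ?_⟩
  rw [RingCon.lift_mk']
  exact augmentation.commutes r

/-- In a semisimple ring the image of the augmentation ideal is generated by an idempotent `e`,
so `π(m) = π(m) e = π(m x)` for a lift `x` of `e`; comparing coefficients of `m` shows `m ∈ ⟨S⟩`. -/
theorem exists_mem_mdvd_of_isSemisimpleRing [Nontrivial R] {S : Set (Word n)}
    (hS : IsSemisimpleRing (QuotRing (TwoSidedIdeal.span (mono R '' S)))) {m : Word n}
    (hm : m ≠ 1) : ∃ w ∈ S, MDvd w m := by
  set I := TwoSidedIdeal.span (mono R '' S)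
  set π := I.ringCon.mk'
  have hπ : Function.Surjective π := RingCon.mkₐ_surjective (α := R) I.ringCon
  obtain ⟨e, he, hJ⟩ := IsSemisimpleRing.ideal_eq_span_idempotent
    ((RingHom.ker (augmentation : FreeAlg R n →ₐ[R] R)).map π)
  obtain ⟨x, hx, rfl⟩ := (Ideal.mem_map_iff_of_surjective π hπ).mp
    (hJ ▸ Ideal.mem_span_singleton_self e)
  have hmJ : π (mono R m) ∈ Ideal.span {π x} := hJ ▸ Ideal.mem_map_of_mem π (by
    rw [RingHom.mem_ker, augmentation_apply, coeff_mono, if_neg hm])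
  obtain ⟨a, ha⟩ := Ideal.mem_span_singleton'.mp hmJ
  have hfix : π (mono R m * x) = π (mono R m) := by
    rw [map_mul, ← ha, mul_assoc, he.eq]
  have hmem : mono R m - mono R m * x ∈ I :=
    TwoSidedIdeal.ringCon_mk'_eq_zero_iff.mp (by rw [map_sub, hfix, sub_self])
  refine support_subset_of_mem_span_mono hmem m (Finsupp.mem_support_iff.mpr ?_)
  rw [MonoidAlgebra.coeff_sub, Finsupp.sub_apply, coeff_mono_mul_self, ← augmentation_apply,
    RingHom.mem_ker.mp hx, sub_zero, coeff_mono, if_pos rfl]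
  exact one_ne_zero

section LeadingMonomial

variable [LinearOrder (Word n)]

lemma le_LMon {f : FreeAlg R n} {w : Word n} (hw : w ∈ f.coeff.support) : w ≤ LMon f := by
  have hf : f ≠ 0 := by rintro rfl; simp at hw
  rw [LMon, dif_neg hf]
  exact Finset.le_max' _ _ hw

lemma LMon_mem_support {f : FreeAlg R n} (hf : f ≠ 0) : LMon f ∈ f.coeff.support := by
  rw [LMon, dif_neg hf]
  exact Finset.max'_mem _ _

lemma IsMonic.lt_LMon_of_mem_support_sub {f : FreeAlg R n} (hf : IsMonic f) {t : Word n}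
    (ht : t ∈ (f - mono R (LMon f)).coeff.support) : t < LMon f := by
  rw [Finsupp.mem_support_iff, MonoidAlgebra.coeff_sub, Finsupp.sub_apply, coeff_mono] at ht
  rcases eq_or_ne (LMon f) t with rfl | htL
  · exact absurd (by rw [if_pos rfl, ← LCoef, hf.2, sub_self]) ht
  · rw [if_neg htL, sub_zero] at ht
    exact (le_LMon (Finsupp.mem_support_iff.mpr ht)).lt_of_ne htL.symm

lemma IsMonic.eq_one_of_LMon_eq_one (h1 : ∀ w : Word n, 1 ≤ w) {f : FreeAlg R n}
    (hf : IsMonic f) (hL : LMon f = 1) : f = 1 := by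
  have hsub : f - mono R (LMon f) = 0 := by
    rw [← MonoidAlgebra.coeff_eq_zero, ← Finsupp.support_eq_empty,
      Finset.eq_empty_iff_forall_notMem]
    exact fun t ht => (hf.lt_LMon_of_mem_support_sub ht).not_ge (hL ▸ h1 t)
  rw [sub_eq_zero.mp hsub, hL]
  rfl

/-- Division by monic elements of `T` rewrites every word `m ≠ 1` modulo `⟨T⟩` as a combination
of smaller words, so by well-founded induction `R⟨X⟩/⟨T⟩` is spanned by `1`. -/
theorem algebraMap_quotRing_surjective (hord : IsMonomialOrder n) {T : Set (FreeAlg R n)}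
    (hT : ∀ m : Word n, m ≠ 1 → ∃ h ∈ T, IsMonic h ∧ MDvd (LMon h) m) :
    Function.Surjective (algebraMap R (QuotRing (TwoSidedIdeal.span T))) := by
  have := hord.1
  set π := (TwoSidedIdeal.span T).ringCon.mkₐ R
  set P : Submodule R (FreeAlg R n) := (Subalgebra.toSubmodule ⊥).comap π.toLinearMap
  have hmono (m : Word n) : mono R m ∈ P := by
    induction m using WellFoundedLT.induction with | ind m ih => ?_
    rcases eq_or_ne m 1 with rfl | hm
    · show π (mono R 1) ∈ (⊥ : Subalgebra R _)
      rw [show mono R (1 : Word n) = 1 from rfl, map_one]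
      exact one_mem _
    obtain ⟨h, hT, hmon, u, s, rfl⟩ := hT m hm
    have hsplit : mono R (u * LMon h * s) =
        mono R u * h * mono R s - mono R u * (h - mono R (LMon h)) * mono R s := by
      simp only [mono, map_mul, mul_sub, sub_mul, sub_sub_cancel]
    rw [hsplit]
    refine sub_mem ?_ (mem_of_forall_mono_mem fun w hw => ?_)
    · have hI : mono R u * h * mono R s ∈ TwoSidedIdeal.span T :=
        TwoSidedIdeal.mul_mem_right _ _ _ (TwoSidedIdeal.mul_mem_left _ _ _
          (TwoSidedIdeal.subset_span hT))
      show π _ ∈ (⊥ : Subalgebra R _)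
      rw [show π _ = 0 from TwoSidedIdeal.ringCon_mk'_eq_zero_iff.mpr hI]
      exact zero_mem _
    · obtain ⟨t, ht, rfl⟩ := exists_eq_of_mem_support_mono_mul_mul_mono hw
      exact ih _ (hord.2 u t (LMon h) s (hmon.lt_LMon_of_mem_support_sub ht))
  intro q
  obtain ⟨x, rfl⟩ := RingCon.mkₐ_surjective (α := R) _ q
  exact Algebra.mem_bot.mp (mem_of_forall_mono_mem (P := P) fun w _ => hmono w)

end LeadingMonomial

section LeadingHomogeneous

variable [LinearOrder (Word n)] (d : Fin n → ℕ)

lemma coeff_LH (f : FreeAlg R n) (t : Word n) :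
    (LH d f).coeff t = if wdeg d t = maxdeg d f then f.coeff t else 0 := by
  rw [LH, MonoidAlgebra.coeff_sum, Finsupp.finsetSum_apply]
  simp only [MonoidAlgebra.coeff_single, Finsupp.single_apply, Finset.sum_ite_eq',
    Finset.mem_filter, Finsupp.mem_support_iff]
  by_cases h : f.coeff t = 0 <;> simp [h]

lemma support_LH_subset (f : FreeAlg R n) : (LH d f).coeff.support ⊆ f.coeff.support := by
  intro t ht
  rw [Finsupp.mem_support_iff, coeff_LH] at ht
  exact Finsupp.mem_support_iff.mpr fun h => ht (by simp [h])

variable {d} (hgr : ∀ u v : Word n, wdeg d u < wdeg d v → u < v)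
include hgr

lemma maxdeg_eq_wdeg_LMon {f : FreeAlg R n} (hf : f ≠ 0) : maxdeg d f = wdeg d (LMon f) :=
  le_antisymm (Finset.sup_le fun _ hw => not_lt.mp fun h => (le_LMon hw).not_gt (hgr _ _ h))
    (Finset.le_sup (LMon_mem_support hf))

lemma coeff_LH_LMon {f : FreeAlg R n} (hf : f ≠ 0) :
    (LH d f).coeff (LMon f) = f.coeff (LMon f) := by
  rw [coeff_LH, if_pos (maxdeg_eq_wdeg_LMon hgr hf).symm]

lemma LH_ne_zero {f : FreeAlg R n} (hf : f ≠ 0) : LH d f ≠ 0 := fun h =>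
  Finsupp.mem_support_iff.mp (LMon_mem_support hf) (by rw [← coeff_LH_LMon hgr hf, h]; rfl)

lemma LMon_LH {f : FreeAlg R n} (hf : f ≠ 0) : LMon (LH d f) = LMon f := by
  have hmem : LMon f ∈ (LH d f).coeff.support := by
    rw [Finsupp.mem_support_iff, coeff_LH_LMon hgr hf]
    exact Finsupp.mem_support_iff.mp (LMon_mem_support hf)
  exact le_antisymm (le_LMon (support_LH_subset d f (LMon_mem_support (LH_ne_zero hgr hf))))
    (le_LMon hmem)

lemma isMonic_LH {f : FreeAlg R n} (hf : IsMonic f) : IsMonic (LH d f) :=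
  ⟨LH_ne_zero hgr hf.1, by rw [LCoef, LMon_LH hgr hf.1, coeff_LH_LMon hgr hf.1]; exact hf.2⟩

end LeadingHomogeneous

theorem isSemisimpleRing_quotRing_span_of_LMon [LinearOrder (Word n)] {d : Fin n → ℕ}
    (hd : ∀ i, 0 < d i) (hord : IsGradedMonomialOrder d) {S : Set (Word n)}
    (hS : IsSemisimpleRing (QuotRing (TwoSidedIdeal.span (mono R '' S))))
    {T : Set (FreeAlg R n)} (hT : ∀ w ∈ S, ∃ h ∈ T, IsMonic h ∧ LMon h = w) :
    IsSemisimpleRing (QuotRing (TwoSidedIdeal.span T)) := by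
  by_cases h1 : (1 : FreeAlg R n) ∈ TwoSidedIdeal.span T
  · have := TwoSidedIdeal.subsingleton_quotient_of_one_mem h1
    infer_instance
  have : Nontrivial R := by
    refine not_subsingleton_iff_nontrivial.mp fun _ => h1 ?_
    rw [Subsingleton.elim (1 : FreeAlg R n) 0]
    exact zero_mem _
  have hS1 : 1 ∉ S := fun hS1 => by
    obtain ⟨h, hT, hmon, hL⟩ := hT 1 hS1
    have h_eq := hmon.eq_one_of_LMon_eq_one (one_le_of_weights_pos hd hord.2) hL
    exact h1 (h_eq ▸ TwoSidedIdeal.subset_span hT)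
  have := isSemisimpleRing_of_quotRing_span_mono hS1 hS
  refine (algebraMap R _).isSemisimpleRing_of_surjective
    (algebraMap_quotRing_surjective hord.1 fun m hm => ?_)
  obtain ⟨w, hw, hdvd⟩ := exists_mem_mdvd_of_isSemisimpleRing hS hm
  obtain ⟨h, hT, hmon, rfl⟩ := hT w hw
  exact ⟨h, hT, hmon, hdvd⟩

/-- If `G` is a monic Gröbner basis of `I = ⟨G⟩` with respect to an
ℕ-graded monomial ordering and the monomial algebra `R⟨X⟩/⟨LM(G)⟩` is a semisimple ring, then so are
`R⟨X⟩/⟨LH(G)⟩` and `A = R⟨X⟩/I`. -/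
theorem semisimple_lifts [LinearOrder (Word n)]
    (d : Fin n → ℕ) (hd : ∀ i, 0 < d i) (hord : IsGradedMonomialOrder d)
    (G : Set (FreeAlg R n)) (hGB : IsMonicGB G (TwoSidedIdeal.span G))
    (hS : IsSemisimpleRing (QuotRing (TwoSidedIdeal.span (mono R '' LMset G)))) :
    IsSemisimpleRing (QuotRing (TwoSidedIdeal.span (LHset d G))) ∧
    IsSemisimpleRing (QuotRing (TwoSidedIdeal.span G)) := by
  obtain ⟨hmonic, -⟩ := hGB
  constructor
  · refine isSemisimpleRing_quotRing_span_of_LMon hd hord hS ?_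
    rintro _ ⟨g, hg, hg0, rfl⟩
    exact ⟨LH d g, ⟨g, hg, hg0, rfl⟩, isMonic_LH hord.2 (hmonic g hg), LMon_LH hord.2 hg0⟩
  · refine isSemisimpleRing_quotRing_span_of_LMon hd hord hS ?_
    rintro _ ⟨g, hg, -, rfl⟩
    exact ⟨g, hg, hmonic g hg, rfl⟩
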